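/- arXiv:2108.04113 — 2 statements merged into one kernel-verified Lean document; each statement's English description precedes it below -/
import Mathlib

section
/- Let P1, P2 : \mathbb{N} \times \mathbb{N} \to \mathbb{Z} and C : \mathbb{N} \to \mathbb{Z} satisfy, for all nonnegative integers m and n: P1(m,n) = (n+2)^m - \sum_{j=0}^{m-1} \binom{m}{j} (2^{m-j} + 1) P1(j,n), P2(m,n) = (n+1)^m - \sum_{j=0}^{m-1} \binom{m}{j} (2^{m-j} + 1) P2(j,n), and C(m) = -1 - \sum_{j=0}^{m-1} \binom{m}{j} (2^{m-j} + 1) C(j) (empty sums when m = 0). Then for all nonnegative integers m and n: \sum_{k=1}^{n} k^m F_k = P1(m,n) F_n + P2(m,n) F_{n+1} + C(m). -/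
/-!
The three recursions have the same unit-triangular shape
`a m = f m - ∑_{j<m} c m j * a j`, so each determines its solution from the forcing term `f`,
and solutions depend linearly on `f`. By the binomial theorem `m ↦ x ^ m` solves the recursion
forced by `(x + 2) ^ m + (x + 1) ^ m - x ^ m`. Comparing forcing terms gives
`P2(m, n+1) = P1(m, n)`, `P1(m, n+1) + P2(m, n+1) - P2(m, n) = (n+1)^m` and `P2(m, 0) + C(m) = 0`,
which are exactly what makes the right-hand side grow by `(n+1)^m F_{n+1}` under the Fibonacci
recurrence.
-/

/-- Fibonacci numbers over the integers, `F_{-n} = (-1)^{n-1} F_n`. -/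
def fibZ (n : ℤ) : ℤ :=
  if 0 ≤ n then (Nat.fib n.toNat : ℤ)
  else (-1) ^ ((-n).toNat + 1) * (Nat.fib (-n).toNat : ℤ)

open Finset

def SolvesTriangularRec {R : Type*} [Ring R] (c : ℕ → ℕ → R) (f a : ℕ → R) : Prop :=
  ∀ m, a m = f m - ∑ j ∈ range m, c m j * a j

namespace SolvesTriangularRec

variable {R : Type*} [Ring R] {c : ℕ → ℕ → R} {f g a b : ℕ → R}

theorem unique (ha : SolvesTriangularRec c f a) (hb : SolvesTriangularRec c f b) : a = b := by
  funext m
  induction m using Nat.strong_induction_on with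
  | _ m ih =>
    rw [ha m, hb m]
    congr 1
    exact sum_congr rfl fun j hj => by rw [ih j (mem_range.mp hj)]

theorem zero : SolvesTriangularRec c 0 0 := fun m => by simp

theorem add (ha : SolvesTriangularRec c f a) (hb : SolvesTriangularRec c g b) :
    SolvesTriangularRec c (f + g) (a + b) := fun m => by
  simp only [Pi.add_apply, mul_add, sum_add_distrib, ha m, hb m]
  abel

theorem neg (ha : SolvesTriangularRec c f a) : SolvesTriangularRec c (-f) (-a) := fun m => by
  simp only [Pi.neg_apply, mul_neg, sum_neg_distrib, ha m]
  abel

theorem sub (ha : SolvesTriangularRec c f a) (hb : SolvesTriangularRec c g b) :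
    SolvesTriangularRec c (f - g) (a - b) := by
  simpa only [sub_eq_add_neg] using ha.add hb.neg

end SolvesTriangularRec

def ledinCoeff (m j : ℕ) : ℤ := m.choose j * (2 ^ (m - j) + 1)

theorem sum_range_succ_ledinCoeff_mul_pow (x : ℤ) (m : ℕ) :
    ∑ j ∈ range (m + 1), ledinCoeff m j * x ^ j = (x + 2) ^ m + (x + 1) ^ m := by
  rw [add_pow, add_pow, ← sum_add_distrib]
  exact sum_congr rfl fun j _ => by rw [ledinCoeff, one_pow]; ring

theorem solvesTriangularRec_pow (x : ℤ) :
    SolvesTriangularRec ledinCoeff (fun m => (x + 2) ^ m + (x + 1) ^ m - x ^ m) (x ^ ·) :=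
  fun m => by
    have h := sum_range_succ_ledinCoeff_mul_pow x m
    rw [sum_range_succ, ledinCoeff, Nat.choose_self, Nat.sub_self] at h
    push_cast at h
    linear_combination h

theorem sum_Icc_mul_fib_eq {w p q : ℕ → ℤ} {c : ℤ} (hshift : ∀ n, q (n + 1) = p n)
    (hstep : ∀ n, p (n + 1) + q (n + 1) - q n = w (n + 1)) (hinit : q 0 + c = 0) (n : ℕ) :
    ∑ k ∈ Icc 1 n, w k * (Nat.fib k : ℤ) = p n * Nat.fib n + q n * Nat.fib (n + 1) + c := by
  induction n with
  | zero => simpa using hinit.symm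
  | succ n ih =>
    rw [sum_Icc_succ_top (Nat.le_add_left 1 n), ih, ← hstep n, hshift n, Nat.fib_add_two]
    push_cast
    ring

theorem fibZ_natCast (k : ℕ) : fibZ k = Nat.fib k := by
  simp [fibZ]

theorem ledin_fib_recursive (P1 P2 : ℕ → ℕ → ℤ) (C : ℕ → ℤ)
    (hP1 : ∀ m n : ℕ, P1 m n =
      ((n : ℤ) + 2) ^ m - ∑ j ∈ Finset.range m, (m.choose j : ℤ) * (2 ^ (m - j) + 1) * P1 j n)
    (hP2 : ∀ m n : ℕ, P2 m n =
      ((n : ℤ) + 1) ^ m - ∑ j ∈ Finset.range m, (m.choose j : ℤ) * (2 ^ (m - j) + 1) * P2 j n)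
    (hC : ∀ m : ℕ, C m =
      -1 - ∑ j ∈ Finset.range m, (m.choose j : ℤ) * (2 ^ (m - j) + 1) * C j) :
    ∀ m n : ℕ, (∑ k ∈ Finset.Icc 1 n, (k : ℤ) ^ m * fibZ k) =
      P1 m n * fibZ n + P2 m n * fibZ (n + 1) + C m := by
  have solP1 (n : ℕ) : SolvesTriangularRec ledinCoeff (((n : ℤ) + 2) ^ ·) (P1 · n) :=
    fun m => hP1 m n
  have solP2 (n : ℕ) : SolvesTriangularRec ledinCoeff (((n : ℤ) + 1) ^ ·) (P2 · n) :=
    fun m => hP2 m n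
  have solC : SolvesTriangularRec ledinCoeff (fun _ => -1) C := hC
  have shift (n : ℕ) : (P2 · (n + 1)) = (P1 · n) := by
    refine (solP2 (n + 1)).unique ?_
    simpa [add_assoc, one_add_one_eq_two] using solP1 n
  have step (n : ℕ) : (fun m => P1 m (n + 1) + P2 m (n + 1) - P2 m n) = (((n : ℤ) + 1) ^ ·) := by
    refine (((solP1 (n + 1)).add (solP2 (n + 1))).sub (solP2 n)).unique ?_
    convert solvesTriangularRec_pow ((n : ℤ) + 1) using 1
    funext m
    simp only [Pi.add_apply, Pi.sub_apply, Nat.cast_add_one]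
  have init : (P2 · 0) + C = 0 := by
    refine ((solP2 0).add solC).unique ?_
    convert SolvesTriangularRec.zero using 1
    funext
    simp
  intro m n
  simp only [fibZ_natCast, ← Nat.cast_succ]
  exact sum_Icc_mul_fib_eq (fun n => congrFun (shift n) m)
    (fun n => by simpa using congrFun (step n) m) (congrFun init m) n
end

section
/- Let a, b, p, q be complex numbers with p \neq 0, q \neq 0 and p^2 \neq 4q, let h be a nonnegative integer with 1 - V_h + q^h \neq 0, and let r be any integer. Then for all nonnegative integers m and n: \sum_{k=1}^{n} k^m w_{hk+r} = -\delta_{m,0} w_r - n^m (w_{h(n+1)+r} - q^h w_{hn+r})/(1 - V_h + q^h) + (1/(1 - V_h + q^h)^{m+1}) \sum_{c=0}^{m+1} (-1)^c \binom{m+1}{c} q^{hc} \sum_{j=0}^{m} A(m,j) w_{h(j-c)+r} - \sum_{s=1}^{m} \binom{m}{s} (n^{m-s}/(1 - V_h + q^h)^{s+1}) \sum_{c=0}^{s+1} (-1)^c \binom{s+1}{c} q^{hc} \sum_{j=0}^{s} A(s,j) w_{h(j-c+n)+r}, where \delta_{m,0} is the Kronecker delta. -/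
/-!
Let `E` be the shift `W ↦ W (· + 1)` of sequences on `ℤ`. From `V_h w_j = w_{j+h} + q^h w_{j-h}`,
the sequence `W k = w (h k + r)` satisfies the recurrence with `P = V_h`, `Q = q^h`. Hence `f(E) W`
depends only on `f` modulo `X² - P X + Q`, and modulo this polynomial `(1 - X)(X - Q) ≡ D X`,
where `D = 1 - P + Q`.

The Eulerian polynomial is `A_s(X) = (1 - X)^(s+1) ∑ₜ t^s X^t`. Splitting this series at `t = n`
and expanding `(t + n)^m` gives
`(1 - X)^(m+1) ∑_{k<n} k^m X^k = A_m - X^n ∑ₛ C(m,s) n^(m-s) A_s (1 - X)^(m-s)`.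
Multiplied by `(X - Q)^(m+1)`, every factor `(1 - X)(X - Q)` becomes `D X`, and applying the
result to `W` expresses `D^(m+1) ∑_{k<n} k^m W_k` through the values `(X - Q)^(s+1) A_s(E) W`,
which are the double sums of the formula.
-/

/-- The Eulerian numbers `A(i,j) = ∑_{t=0}^{j} (-1)^t C(i+1,t) (j-t)^i`. -/
def eulerianA (i j : ℕ) : ℤ :=
  ∑ t ∈ Finset.range (j + 1), (-1 : ℤ) ^ t * (Nat.choose (i + 1) t) * ((j - t : ℕ) ^ i : ℤ)

open Finset Polynomial
open scoped PowerSeries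

theorem eulerianA_eq_zero_of_lt {s d : ℕ} (h : s < d) : eulerianA s d = 0 := by
  have hsub : range (s + 2) ⊆ range (d + 1) := range_subset_range.mpr (by omega)
  rw [eulerianA, ← sum_subset hsub fun t _ ht => by
    rw [Nat.choose_eq_zero_of_lt (not_lt.mp (mt mem_range.mpr ht)), Nat.cast_zero, mul_zero,
      zero_mul]]
  have hdiff := congr_fun (fwdDiff_iter_pow_eq_zero_of_lt (R := ℤ) (Nat.lt_succ_self s))
    ((d : ℤ) - (s + 1))
  rw [fwdDiff_iter_eq_sum_shift, ← sum_range_reflect, Pi.zero_apply] at hdiff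
  rw [← hdiff]
  refine sum_congr rfl fun t ht => ?_
  replace ht : t ≤ s + 1 := Nat.lt_succ_iff.mp (mem_range.mp ht)
  simp only [Nat.succ_eq_add_one, Nat.add_sub_cancel, Nat.sub_sub_self ht, smul_eq_mul,
    nsmul_eq_mul, mul_one]
  rw [← Nat.choose_symm ht]
  push_cast [Nat.cast_sub ht, Nat.cast_sub (show t ≤ d by omega)]
  ring_nf

section Eulerian

variable {R : Type*} [CommRing R]

noncomputable def eulerianPoly (R : Type*) [CommRing R] (s : ℕ) : R[X] :=
  ∑ j ∈ range (s + 1), C (eulerianA s j : R) * X ^ j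

theorem coeff_eulerianPoly (s d : ℕ) : (eulerianPoly R s).coeff d = eulerianA s d := by
  simp only [eulerianPoly, finsetSum_coeff, coeff_C_mul_X_pow, sum_ite_eq, mem_range]
  split_ifs with h
  · rfl
  · rw [eulerianA_eq_zero_of_lt (by omega), Int.cast_zero]

theorem PowerSeries.coeff_one_sub_X_pow (n t : ℕ) :
    coeff t ((1 - X : R⟦X⟧) ^ n) = (-1) ^ t * n.choose t := by
  have : (1 - X : R⟦X⟧) ^ n = rescale (-1) (((1 + Polynomial.X) ^ n : R[X]) : R⟦X⟧) := by
    simp [map_pow, rescale_X, sub_eq_add_neg]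
  rw [this, coeff_rescale, Polynomial.coeff_coe, coeff_one_add_X_pow]

theorem coe_eulerianPoly (s : ℕ) :
    (eulerianPoly R s : R⟦X⟧) =
      (1 - PowerSeries.X) ^ (s + 1) * PowerSeries.mk fun t => (t : R) ^ s := by
  ext d
  rw [Polynomial.coeff_coe, coeff_eulerianPoly, PowerSeries.coeff_mul,
    Finset.Nat.sum_antidiagonal_eq_sum_range_succ_mk, eulerianA]
  push_cast
  simp [PowerSeries.coeff_one_sub_X_pow]

theorem PowerSeries.mk_pow_eq_sum_range_add_X_pow_mul (m n : ℕ) :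
    (mk fun t => (t : R) ^ m) =
      ((∑ k ∈ range n, Polynomial.C ((k : R) ^ m) * Polynomial.X ^ k : R[X]) : R⟦X⟧) +
        X ^ n * ∑ s ∈ range (m + 1),
          C ((m.choose s : R) * n ^ (m - s)) * mk fun t => (t : R) ^ s := by
  ext d
  simp only [coeff_mk, map_add, Polynomial.coeff_coe, finsetSum_coeff,
    Polynomial.coeff_C_mul_X_pow, sum_ite_eq, mem_range, coeff_X_pow_mul', map_sum, coeff_C_mul]
  by_cases hd : d < n
  · simp [hd, Nat.not_le.mpr hd]
  · rw [if_neg hd, if_pos (by omega), zero_add]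
    conv_lhs => rw [← Nat.sub_add_cancel (Nat.le_of_not_lt hd), Nat.cast_add, add_pow]
    exact sum_congr rfl fun s _ => by ring

theorem one_sub_X_pow_mul_sum_range_pow_mul_X_pow (m n : ℕ) :
    (1 - X) ^ (m + 1) * ∑ k ∈ range n, C ((k : R) ^ m) * X ^ k =
      eulerianPoly R m - X ^ n * ∑ s ∈ range (m + 1),
        C ((m.choose s : R) * n ^ (m - s)) * eulerianPoly R s * (1 - X) ^ (m - s) := by
  rw [← Polynomial.coe_inj]
  have hsum : ((∑ s ∈ range (m + 1), C ((m.choose s : R) * n ^ (m - s)) * eulerianPoly R s *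
      (1 - X) ^ (m - s) : R[X]) : R⟦X⟧) = (1 - PowerSeries.X) ^ (m + 1) *
      ∑ s ∈ range (m + 1), PowerSeries.C ((m.choose s : R) * n ^ (m - s)) *
        PowerSeries.mk fun t => (t : R) ^ s := by
    rw [← coeToPowerSeries.ringHom_apply, map_sum, mul_sum]
    refine sum_congr rfl fun s hs => ?_
    simp only [map_mul, map_pow, map_sub, map_one, coeToPowerSeries.ringHom_apply,
      Polynomial.coe_X, Polynomial.coe_C, coe_eulerianPoly]
    rw [show m + 1 = (m - s) + (s + 1) by have := mem_range.mp hs; omega, pow_add]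
    ring
  simp only [Polynomial.coe_mul, Polynomial.coe_pow, Polynomial.coe_sub, Polynomial.coe_one,
    Polynomial.coe_X, hsum, coe_eulerianPoly]
  rw [PowerSeries.mk_pow_eq_sum_range_add_X_pow_mul m n]
  ring

end Eulerian

section Shift

variable {R : Type*} [CommRing R]

noncomputable def shift : Module.End R (ℤ → R) := LinearMap.funLeft R R (· + 1)

theorem shift_apply (W : ℤ → R) (u : ℤ) : shift W u = W (u + 1) := rfl

theorem shift_pow_apply (W : ℤ → R) (k : ℕ) (u : ℤ) : (shift ^ k) W u = W (u + k) := by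
  induction k generalizing u with
  | zero => simp
  | succ k ih => rw [pow_succ', Module.End.mul_apply, shift_apply, ih]; push_cast; ring_nf

noncomputable def shiftEval (W : ℤ → R) (u : ℤ) : R[X] →ₗ[R] R :=
  LinearMap.proj u ∘ₗ LinearMap.applyₗ W ∘ₗ (aeval shift).toLinearMap

noncomputable def recurrencePoly (P Q : R) : R[X] := X ^ 2 - C P * X + C Q

variable {W : ℤ → R}

theorem shiftEval_apply (u : ℤ) (f : R[X]) : shiftEval W u f = aeval shift f W u := rfl

theorem shiftEval_X_pow_mul (u : ℤ) (k : ℕ) (f : R[X]) :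
    shiftEval W u (X ^ k * f) = shiftEval W (u + k) f := by
  rw [shiftEval_apply, map_mul, Module.End.mul_apply, map_pow, aeval_X, shift_pow_apply]
  rfl

theorem shiftEval_X_pow (u : ℤ) (k : ℕ) : shiftEval W u (X ^ k) = W (u + k) := by
  rw [shiftEval_apply, map_pow, aeval_X, shift_pow_apply]

theorem aeval_shift_recurrencePoly {P Q : R} (hW : ∀ k, W (k + 2) = P * W (k + 1) - Q * W k) :
    aeval shift (recurrencePoly P Q) W = 0 := by
  ext k
  simp only [recurrencePoly, map_add, map_sub, map_mul, aeval_X_pow, aeval_X, aeval_C,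
    LinearMap.add_apply, LinearMap.sub_apply, Module.End.mul_apply, Module.algebraMap_end_apply,
    Pi.add_apply, Pi.sub_apply, Pi.smul_apply, smul_eq_mul, shift_pow_apply, shift_apply,
    Pi.zero_apply, Nat.cast_ofNat, hW]
  ring

theorem shiftEval_eq_of_mk_eq {P Q : R} (hW : ∀ k, W (k + 2) = P * W (k + 1) - Q * W k)
    {f f' : R[X]} (h : AdjoinRoot.mk (recurrencePoly P Q) f = AdjoinRoot.mk _ f') (u : ℤ) :
    shiftEval W u f = shiftEval W u f' := by
  obtain ⟨g, hg⟩ := AdjoinRoot.mk_eq_mk.mp h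
  rw [← sub_eq_zero, ← map_sub, shiftEval_apply, hg, mul_comm, map_mul, Module.End.mul_apply,
    aeval_shift_recurrencePoly hW, map_zero, Pi.zero_apply]

end Shift

section Transform

variable {R : Type*} [CommRing R]

/-- `(1 - Q E⁻¹)^(s+1) A_s(E) W` at `τ`, for the shift `E` and the Eulerian polynomial `A_s`. -/
def eulerianTransform (Q : R) (W : ℤ → R) (s : ℕ) (τ : ℤ) : R :=
  ∑ c ∈ range (s + 2), (-1) ^ c * ((s + 1).choose c : R) * Q ^ c *
    ∑ j ∈ range (s + 1), (eulerianA s j : R) * W (j - c + τ)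

theorem eulerianTransform_zero (Q : R) (W : ℤ → R) (τ : ℤ) :
    eulerianTransform Q W 0 τ = W τ - Q * W (τ - 1) := by
  simp [eulerianTransform, sum_range_succ, eulerianA, sub_eq_add_neg, add_comm]

theorem X_sub_C_pow_eq_sum (Q : R) (n : ℕ) :
    (X - C Q) ^ n =
      ∑ c ∈ range (n + 1), C ((-1) ^ c * (n.choose c : R) * Q ^ c) * X ^ (n - c) := by
  rw [sub_eq_neg_add, add_pow]
  refine sum_congr rfl fun c _ => ?_
  rw [← C_neg, ← C_pow, neg_pow, ← C_eq_natCast]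
  simp only [map_mul]
  ring

theorem shiftEval_eulerianPoly_mul (W : ℤ → R) (Q : R) (s : ℕ) (u : ℤ) :
    shiftEval W u (eulerianPoly R s * (X - C Q) ^ (s + 1)) =
      eulerianTransform Q W s (u + (s + 1)) := by
  rw [mul_comm, X_sub_C_pow_eq_sum, sum_mul, map_sum (shiftEval W u), eulerianTransform]
  refine sum_congr rfl fun c hc => ?_
  rw [mul_assoc, ← smul_eq_C_mul, map_smul, shiftEval_X_pow_mul, eulerianPoly, map_sum,
    smul_eq_mul]
  congr 1
  refine sum_congr rfl fun j _ => ?_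
  rw [← smul_eq_C_mul, map_smul, shiftEval_X_pow, smul_eq_mul,
    Nat.cast_sub (by simpa [Nat.lt_succ_iff] using hc)]
  push_cast
  ring_nf

end Transform

section Sum

variable {R : Type*} [CommRing R]

theorem mk_recurrencePoly_sum_range_pow_mul_X_pow (P Q : R) (m n : ℕ) :
    AdjoinRoot.mk (recurrencePoly P Q)
      (C ((1 - P + Q) ^ (m + 1)) * (X ^ (m + 1) * ∑ k ∈ range n, C ((k : R) ^ m) * X ^ k)) =
    AdjoinRoot.mk _ (eulerianPoly R m * (X - C Q) ^ (m + 1) - ∑ s ∈ range (m + 1),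
      C ((m.choose s : R) * n ^ (m - s) * (1 - P + Q) ^ (m - s)) *
        (X ^ (n + (m - s)) * (eulerianPoly R s * (X - C Q) ^ (s + 1)))) := by
  set g := recurrencePoly P Q
  set ρ := AdjoinRoot.root g
  set D := 1 - P + Q
  have hρ : (1 - ρ) * (ρ - AdjoinRoot.of g Q) = AdjoinRoot.of g D * ρ := by
    have : AdjoinRoot.mk g (X ^ 2 - C P * X + C Q) = 0 := AdjoinRoot.mk_self
    simp only [map_add, map_sub, map_mul, map_pow, AdjoinRoot.mk_X, AdjoinRoot.mk_C] at this
    simp only [D, map_add, map_sub, map_one]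
    linear_combination -this
  have hterm : ∀ s ≤ m, ∀ a e : AdjoinRoot g,
      (ρ - AdjoinRoot.of g Q) ^ (m + 1) * ρ ^ n * (a * e * (1 - ρ) ^ (m - s)) =
        a * AdjoinRoot.of g D ^ (m - s) *
          (ρ ^ (n + (m - s)) * (e * (ρ - AdjoinRoot.of g Q) ^ (s + 1))) := by
    intro s hs a e
    have := congrArg (· ^ (m - s)) hρ
    simp only [mul_pow] at this
    rw [show m + 1 = (m - s) + (s + 1) by omega, pow_add, pow_add]
    linear_combination (a * e * ρ ^ n * (ρ - AdjoinRoot.of g Q) ^ (s + 1)) * this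
  have h := congrArg (AdjoinRoot.mk g) (one_sub_X_pow_mul_sum_range_pow_mul_X_pow (R := R) m n)
  simp only [map_sub, map_mul, map_pow, map_sum, map_one, AdjoinRoot.mk_X, AdjoinRoot.mk_C] at h ⊢
  calc _ = (ρ - AdjoinRoot.of g Q) ^ (m + 1) *
        ((1 - ρ) ^ (m + 1) * ∑ k ∈ range n, AdjoinRoot.of g (k : R) ^ m * ρ ^ k) := by
        rw [← mul_assoc, ← mul_assoc, ← mul_pow, ← mul_pow, mul_comm (ρ - _), hρ]
    _ = _ := by
        rw [h, mul_sub, ← mul_assoc _ (ρ ^ n), mul_sum]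
        exact congrArg₂ _ (mul_comm _ _) (sum_congr rfl fun s hs =>
          hterm s (Nat.lt_succ_iff.mp (mem_range.mp hs)) _ _)

theorem sum_range_pow_mul_of_recurrence {P Q : R} {W : ℤ → R}
    (hW : ∀ k, W (k + 2) = P * W (k + 1) - Q * W k) (m n : ℕ) :
    (1 - P + Q) ^ (m + 1) * ∑ k ∈ range n, (k : R) ^ m * W k =
      eulerianTransform Q W m 0 - ∑ s ∈ range (m + 1),
        (m.choose s : R) * n ^ (m - s) * (1 - P + Q) ^ (m - s) * eulerianTransform Q W s n := by
  have h := shiftEval_eq_of_mk_eq hW (mk_recurrencePoly_sum_range_pow_mul_X_pow P Q m n)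
    (-(m + 1))
  simp only [map_sub, map_sum, ← smul_eq_C_mul, map_smul, shiftEval_X_pow_mul,
    shiftEval_eulerianPoly_mul, shiftEval_X_pow, smul_eq_mul, neg_add_cancel] at h
  calc _ = (1 - P + Q) ^ (m + 1) *
        ∑ k ∈ range n, (k : R) ^ m * W (-((m : ℤ) + 1) + (m + 1 : ℕ) + k) := by
        push_cast; ring_nf
    _ = _ := h
    _ = _ := by
        congr 1
        refine sum_congr rfl fun s hs => ?_
        rw [Nat.cast_add, Nat.cast_sub (Nat.lt_succ_iff.mp (mem_range.mp hs))]
        ring_nf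

end Sum

theorem sum_range_succ_eq_add_sum_Icc {M : Type*} [AddCommMonoid M] (f : ℕ → M) (n : ℕ) :
    ∑ i ∈ range (n + 1), f i = f 0 + ∑ i ∈ Icc 1 n, f i := by
  rw [range_eq_Ico, sum_eq_sum_Ico_succ_bot (Nat.succ_pos n), zero_add, Nat.succ_eq_add_one,
    Ico_add_one_right_eq_Icc]

theorem sum_Icc_pow_mul_of_recurrence {K : Type*} [Field K] {P Q : K} {W : ℤ → K}
    (hW : ∀ k, W (k + 2) = P * W (k + 1) - Q * W k) (hD : 1 - P + Q ≠ 0) (m n : ℕ) :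
    ∑ k ∈ Icc 1 n, (k : K) ^ m * W k =
      -(if m = 0 then (1 : K) else 0) * W 0
        - (n : K) ^ m * ((W (n + 1) - Q * W n) / (1 - P + Q))
        + (1 / (1 - P + Q) ^ (m + 1)) * eulerianTransform Q W m 0
        - ∑ s ∈ Icc 1 m, (m.choose s : K) * ((n : K) ^ (m - s) / (1 - P + Q) ^ (s + 1)) *
            eulerianTransform Q W s n := by
  have hrange : ∑ k ∈ range n, (k : K) ^ m * W k =
      (1 / (1 - P + Q) ^ (m + 1)) * eulerianTransform Q W m 0
      - ∑ s ∈ range (m + 1), (m.choose s : K) * ((n : K) ^ (m - s) / (1 - P + Q) ^ (s + 1)) *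
          eulerianTransform Q W s n := by
    rw [← mul_right_inj' (pow_ne_zero (m + 1) hD), sum_range_pow_mul_of_recurrence hW, mul_sub,
      mul_sum]
    congr 1
    · field_simp
    · refine sum_congr rfl fun s hs => ?_
      rw [show m + 1 = (m - s) + (s + 1) by have := mem_range.mp hs; omega, pow_add]
      field_simp
  have hsum := sum_range_succ (fun k : ℕ => (k : K) ^ m * W k) n
  rw [sum_range_succ_eq_add_sum_Icc, hrange, sum_range_succ_eq_add_sum_Icc] at hsum
  simp only [Nat.cast_zero, zero_pow_eq, Nat.choose_zero_right, Nat.sub_zero,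
    eulerianTransform_zero, Nat.cast_one, one_mul, zero_add, pow_one] at hsum
  have hrec := hW (n - 1)
  rw [show (n : ℤ) - 1 + 2 = n + 1 by ring, show (n : ℤ) - 1 + 1 = n by ring] at hrec
  rw [hrec]
  linear_combination hsum - ((n : K) ^ m * W n) * mul_inv_cancel₀ hD

section Horadam

variable {R : Type*} [CommRing R] {p q : R} {w V : ℤ → R}

theorem lucas_mul_horadam (hw : ∀ j, w j = p * w (j - 1) - q * w (j - 2))
    (hV0 : V 0 = 2) (hV1 : V 1 = p) (hV : ∀ j, V j = p * V (j - 1) - q * V (j - 2)) (h : ℕ)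
    (j : ℤ) : V h * w j = w (j + h) + q ^ h * w (j - h) := by
  induction h using Nat.twoStepInduction generalizing j with
  | zero => simp only [Nat.cast_zero, hV0, add_zero, sub_zero, pow_zero]; ring
  | one =>
    have := hw (j + 1)
    rw [add_sub_cancel_right, show j + 1 - 2 = j - 1 by ring] at this
    rw [Nat.cast_one, hV1, pow_one]
    linear_combination -this
  | more h ih0 ih1 =>
    have hVh := hV (h + 2)
    have hwu := hw (j + h + 2)
    have hwd := hw (j - h)
    have e0 := ih0 j
    have e1 := ih1 j
    push_cast at e1 ⊢
    ring_nf at hVh hwu hwd e0 e1 ⊢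
    linear_combination p * e1 - q * e0 + hVh * w j - hwu - q ^ (h + 1) * hwd

theorem horadam_arith_prog_recurrence (hw : ∀ j, w j = p * w (j - 1) - q * w (j - 2))
    (hV0 : V 0 = 2) (hV1 : V 1 = p) (hV : ∀ j, V j = p * V (j - 1) - q * V (j - 2)) (h : ℕ)
    (r k : ℤ) : w (h * (k + 2) + r) = V h * w (h * (k + 1) + r) - q ^ h * w (h * k + r) := by
  have := lucas_mul_horadam hw hV0 hV1 hV h (h * (k + 1) + r)
  rw [show (h : ℤ) * (k + 1) + r + h = h * (k + 2) + r by ring,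
    show (h : ℤ) * (k + 1) + r - h = h * k + r by ring] at this
  linear_combination -this

end Horadam

theorem horadam_arith_prog_sum_polynomial_form_general (p q : ℂ) (w : ℤ → ℂ)
    (hw : ∀ j : ℤ, w j = p * w (j - 1) - q * w (j - 2))
    (V : ℤ → ℂ) (hV0 : V 0 = 2) (hV1 : V 1 = p)
    (hV : ∀ j : ℤ, V j = p * V (j - 1) - q * V (j - 2))
    (h : ℕ) (hVh : 1 - V h + q ^ h ≠ 0) (r : ℤ) :
    ∀ m n : ℕ,
      (∑ k ∈ Finset.Icc 1 n, (k : ℂ) ^ m * w (h * k + r)) =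
        -(if m = 0 then (1 : ℂ) else 0) * w r
          - (n : ℂ) ^ m * ((w (h * (n + 1) + r) - q ^ h * w (h * n + r)) / (1 - V h + q ^ h))
          + (1 / (1 - V h + q ^ h) ^ (m + 1)) *
              ∑ c ∈ Finset.range (m + 2), (-1 : ℂ) ^ c * ((m + 1).choose c : ℂ) * q ^ (h * c) *
                ∑ j ∈ Finset.range (m + 1), (eulerianA m j : ℂ) * w (h * ((j : ℤ) - c) + r)
          - ∑ s ∈ Finset.Icc 1 m, (m.choose s : ℂ) *
              ((n : ℂ) ^ (m - s) / (1 - V h + q ^ h) ^ (s + 1)) *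
              ∑ c ∈ Finset.range (s + 2), (-1 : ℂ) ^ c * ((s + 1).choose c : ℂ) * q ^ (h * c) *
                ∑ j ∈ Finset.range (s + 1), (eulerianA s j : ℂ) *
                  w (h * ((j : ℤ) - c + n) + r) := by
  intro m n
  have := sum_Icc_pow_mul_of_recurrence (W := fun k => w (h * k + r))
    (horadam_arith_prog_recurrence hw hV0 hV1 hV h r) hVh m n
  simpa only [eulerianTransform, ← pow_mul, mul_zero, zero_add, add_zero] using this

theorem horadam_arith_prog_sum_polynomial_form (a b p q : ℂ)
    (hp : p ≠ 0) (hq : q ≠ 0) (hpq : p ^ 2 ≠ 4 * q)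
    (w : ℤ → ℂ) (hw0 : w 0 = a) (hw1 : w 1 = b)
    (hw : ∀ j : ℤ, w j = p * w (j - 1) - q * w (j - 2))
    (V : ℤ → ℂ) (hV0 : V 0 = 2) (hV1 : V 1 = p)
    (hV : ∀ j : ℤ, V j = p * V (j - 1) - q * V (j - 2))
    (h : ℕ) (hVh : 1 - V h + q ^ h ≠ 0) (r : ℤ) :
    ∀ m n : ℕ,
      (∑ k ∈ Finset.Icc 1 n, (k : ℂ) ^ m * w (h * k + r)) =
        -(if m = 0 then (1 : ℂ) else 0) * w r
          - (n : ℂ) ^ m * ((w (h * (n + 1) + r) - q ^ h * w (h * n + r)) / (1 - V h + q ^ h))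
          + (1 / (1 - V h + q ^ h) ^ (m + 1)) *
              ∑ c ∈ Finset.range (m + 2), (-1 : ℂ) ^ c * ((m + 1).choose c : ℂ) * q ^ (h * c) *
                ∑ j ∈ Finset.range (m + 1), (eulerianA m j : ℂ) * w (h * ((j : ℤ) - c) + r)
          - ∑ s ∈ Finset.Icc 1 m, (m.choose s : ℂ) *
              ((n : ℂ) ^ (m - s) / (1 - V h + q ^ h) ^ (s + 1)) *
              ∑ c ∈ Finset.range (s + 2), (-1 : ℂ) ^ c * ((s + 1).choose c : ℂ) * q ^ (h * c) *
                ∑ j ∈ Finset.range (s + 1), (eulerianA s j : ℂ) *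
                  w (h * ((j : ℤ) - c + n) + r) :=
  horadam_arith_prog_sum_polynomial_form_general p q w hw V hV0 hV1 hV h hVh r
end
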